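/- Let k be a field of characteristic different from 2. The set Z³_h(C₂×C₂, k*) of happy normalized 3-cocycles on C₂×C₂ with coefficients in k* is a group under pointwise multiplication, and it is isomorphic, as a group, to C₂ × C₂ × C₂ × k* × k*. -/

import Mathlib

def IsCocycle {k : Type*} [Field k] {G : Type*} [Group G] (φ : G → G → G → kˣ) : Prop :=
  ∀ x y z t : G, φ y z t * φ x (y * z) t * φ x y z = φ (x * y) z t * φ x y (z * t)

def IsNormalized {k : Type*} [Field k] {G : Type*} [Group G] (φ : G → G → G → kˣ) : Prop :=
  ∀ x z : G, φ x 1 z = 1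

def d2 {k : Type*} [Field k] {G : Type*} [Group G] (g : G → G → kˣ) : G → G → G → kˣ :=
  fun x y z => g y z * (g (x * y) z)⁻¹ * g x (y * z) * (g x y)⁻¹

def IsCoboundary {k : Type*} [Field k] {G : Type*} [Group G] (φ : G → G → G → kˣ) : Prop :=
  ∃ g : G → G → kˣ, φ = d2 g

/-- The Klein four-group `C₂ × C₂`, written multiplicatively. -/
abbrev K : Type := Multiplicative (ZMod 2 × ZMod 2)

def σ : K := Multiplicative.ofAdd (1, 0)
def τ : K := Multiplicative.ofAdd (0, 1)
def ρ : K := Multiplicative.ofAdd (1, 1)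

/-- A normalized 3-cocycle on the Klein group is happy if it takes the value
`p = ε_σ · ε_τ · ε_ρ` on each permutation of `(σ, τ, ρ)`. -/
def IsHappy {k : Type*} [Field k] (φ : K → K → K → kˣ) : Prop :=
  ∀ x y z : K, List.Perm [x, y, z] [σ, τ, ρ] →
    φ x y z = φ σ σ σ * φ τ τ τ * φ ρ ρ ρ

/-- The group `Z³_h(C₂×C₂, kˣ)` of happy normalized 3-cocycles on the Klein group,
under pointwise multiplication. -/
def Z3h (k : Type*) [Field k] : Subgroup (K → K → K → kˣ) where
  carrier := {φ : K → K → K → kˣ | IsCocycle φ ∧ IsNormalized φ ∧ IsHappy φ}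
  one_mem' := by
    refine ⟨?_, ?_, ?_⟩
    · intro x y z t; simp
    · intro x z; rfl
    · intro x y z _; simp
  mul_mem' := by
    intro a b ha hb
    obtain ⟨hac, han, hah⟩ : IsCocycle a ∧ IsNormalized a ∧ IsHappy a := ha
    obtain ⟨hbc, hbn, hbh⟩ : IsCocycle b ∧ IsNormalized b ∧ IsHappy b := hb
    refine ⟨?_, ?_, ?_⟩
    · intro x y z t
      simp only [Pi.mul_apply]
      simpa only [mul_assoc, mul_left_comm, mul_comm] using
        congrArg₂ (· * ·) (hac x y z t) (hbc x y z t)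
    · intro x z
      simp only [Pi.mul_apply, han x z, hbn x z, one_mul]
    · intro x y z hperm
      simp only [Pi.mul_apply, hah x y z hperm, hbh x y z hperm]
      simp only [mul_assoc, mul_left_comm, mul_comm]
  inv_mem' := by
    intro a ha
    obtain ⟨hac, han, hah⟩ : IsCocycle a ∧ IsNormalized a ∧ IsHappy a := ha
    refine ⟨?_, ?_, ?_⟩
    · intro x y z t
      simp only [Pi.inv_apply]
      simpa only [mul_inv, mul_assoc, mul_left_comm, mul_comm] using
        congrArg (·⁻¹) (hac x y z t)
    · intro x z
      simp only [Pi.inv_apply, han x z, inv_one]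
    · intro x y z hperm
      simp only [Pi.inv_apply, hah x y z hperm]
      simp only [mul_inv, mul_assoc, mul_left_comm, mul_comm]

/-!
A happy normalized 3-cocycle `φ` on `C₂ × C₂` is determined by the five values
`ε_σ, ε_τ, ε_ρ, φ(ρ,τ,ρ), φ(τ,ρ,ρ)`: if all five are `1`, sixteen instances of the cocycle
identity force every other value to be `1`. The `ε`'s square to `1`, and every such 5-tuple
occurs: `-1` raised to three trilinear forms over `𝔽₂`, and `u, v ∈ kˣ` raised to two `ℤ`-valued
cocycles, give happy cocycles realising the five coordinates independently. In characteristic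
`≠ 2`, `{±1} ≅ C₂`.
-/

namespace IsCocycle

variable {k : Type*} [Field k] {G : Type*} [Group G] {φ : G → G → G → kˣ}

theorem apply_one_left (hc : IsCocycle φ) (hn : IsNormalized φ) (y z : G) : φ 1 y z = 1 := by
  simpa [hn 1 y, hn 1 (y * z)] using hc 1 1 y z

theorem apply_one_right (hc : IsCocycle φ) (hn : IsNormalized φ) (x y : G) : φ x y 1 = 1 := by
  simpa [hn y 1, hn (x * y) 1] using hc x y 1 1

theorem apply_diag_mul_self_eq_one (hc : IsCocycle φ) (hn : IsNormalized φ) {x : G}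
    (hx : x * x = 1) : φ x x x * φ x x x = 1 := by
  simpa [hx, hn x x, hc.apply_one_left hn, hc.apply_one_right hn] using hc x x x x

end IsCocycle

@[simp] theorem σ_mul_σ : σ * σ = 1 := by decide
@[simp] theorem τ_mul_τ : τ * τ = 1 := by decide
@[simp] theorem ρ_mul_ρ : ρ * ρ = 1 := by decide
@[simp] theorem σ_mul_τ : σ * τ = ρ := by decide
@[simp] theorem τ_mul_σ : τ * σ = ρ := by decide
@[simp] theorem σ_mul_ρ : σ * ρ = τ := by decide
@[simp] theorem ρ_mul_σ : ρ * σ = τ := by decide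
@[simp] theorem τ_mul_ρ : τ * ρ = σ := by decide
@[simp] theorem ρ_mul_τ : ρ * τ = σ := by decide

theorem K.eq_one_or_eq_σ_or_eq_τ_or_eq_ρ (x : K) : x = 1 ∨ x = σ ∨ x = τ ∨ x = ρ := by
  revert x; decide

def evalFive {M : Type*} (E : K → K → K → M) : M × M × M × M × M :=
  (E σ σ σ, E τ τ τ, E ρ ρ ρ, E ρ τ ρ, E τ ρ ρ)

namespace Z3h

variable (k : Type*) [Field k]

def eval : Z3h k →* kˣ × kˣ × kˣ × kˣ × kˣ where
  toFun φ := evalFive φ.1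
  map_one' := rfl
  map_mul' _ _ := rfl

variable {k}

theorem eq_one_of_eval_eq_one {φ : Z3h k} (h : eval k φ = 1) : φ = 1 := by
  obtain ⟨φ, hc, hn, hh⟩ := φ
  simp only [eval, evalFive, MonoidHom.coe_mk, OneHom.coe_mk, Prod.mk_eq_one] at h
  obtain ⟨hσσσ, hτττ, hρρρ, hρτρ, hτρρ⟩ := h
  have h1l := hc.apply_one_left hn
  have h1r := hc.apply_one_right hn
  have hmid : ∀ x z, φ x 1 z = 1 := hn
  have hp (x y z : K) (hxyz : [x, y, z].Perm [σ, τ, ρ]) : φ x y z = 1 := by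
    rw [hh x y z hxyz, hσσσ, hτττ, hρρρ, one_mul, one_mul]
  have hστρ := hp σ τ ρ (by decide)
  have hσρτ := hp σ ρ τ (by decide)
  have hτσρ := hp τ σ ρ (by decide)
  have hτρσ := hp τ ρ σ (by decide)
  have hρστ := hp ρ σ τ (by decide)
  have hρτσ := hp ρ τ σ (by decide)
  -- each instance of the cocycle identity below has exactly one factor not yet known to be `1`
  have hσσρ : φ σ σ ρ = 1 := by simpa [*] using hc σ τ ρ ρ
  have hσρρ : φ σ ρ ρ = 1 := by simpa [*] using hc σ ρ ρ ρ
  have hττρ : φ τ τ ρ = 1 := by simpa [*] using hc τ σ ρ ρ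
  have hττσ : φ τ τ σ = 1 := by simpa [*] using hc τ τ σ ρ
  have hτσσ : φ τ σ σ = 1 := by simpa [*] using hc τ τ ρ σ
  have hρσσ : φ ρ σ σ = 1 := by simpa [*] using hc τ ρ σ σ
  have hσστ : φ σ σ τ = 1 := by simpa [*] using (hc τ ρ σ τ).symm
  have hτρτ : φ τ ρ τ = 1 := by simpa [*] using hc τ ρ τ ρ
  have hρρτ : φ ρ ρ τ = 1 := by simpa [*] using hc τ ρ ρ τ
  have hσττ : φ σ τ τ = 1 := by simpa [*] using hc ρ σ τ τ
  have hρσρ : φ ρ σ ρ = 1 := by simpa [*] using hc ρ σ ρ ρ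
  have hρρσ : φ ρ ρ σ = 1 := by simpa [*] using hc ρ τ σ σ
  have hτστ : φ τ σ τ = 1 := by simpa [*] using hc ρ τ σ τ
  have hρττ : φ ρ τ τ = 1 := by simpa [*] using (hc ρ τ σ ρ).symm
  have hστσ : φ σ τ σ = 1 := by simpa [*] using (hc ρ τ τ σ).symm
  have hσρσ : φ σ ρ σ = 1 := by simpa [*] using (hc ρ τ ρ σ).symm
  refine Subtype.ext (funext fun x => funext fun y => funext fun z => ?_)
  rcases K.eq_one_or_eq_σ_or_eq_τ_or_eq_ρ x with rfl | rfl | rfl | rfl <;>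
    rcases K.eq_one_or_eq_σ_or_eq_τ_or_eq_ρ y with rfl | rfl | rfl | rfl <;>
    rcases K.eq_one_or_eq_σ_or_eq_τ_or_eq_ρ z with rfl | rfl | rfl | rfl <;> simp [*]

variable (k) in
theorem eval_injective : Function.Injective (eval k) :=
  (injective_iff_map_eq_one _).2 fun _ => eq_one_of_eval_eq_one

end Z3h

section Sign

variable (k : Type*) [Field k]

def negOnePowHom : Multiplicative (ZMod 2) →* kˣ where
  toFun a := Units.map (Int.castRingHom k).toMonoidHom ((-1 : ℤˣ) ^ a.toAdd)
  map_one' := by simp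
  map_mul' a b := by simp [uzpow_add]

variable {k}

theorem negOnePowHom_injective (hk : ringChar k ≠ 2) : Function.Injective (negOnePowHom k) := by
  refine (injective_iff_map_eq_one _).2 fun a ha => ?_
  obtain rfl | rfl : a = 1 ∨ a = .ofAdd 1 := by clear ha; revert a; decide
  · rfl
  · exact absurd (congrArg Units.val ha)
      (by simpa [negOnePowHom] using Ring.neg_one_ne_one_of_char_ne_two hk)

theorem mem_range_negOnePowHom {s : kˣ} (hs : s * s = 1) : s ∈ (negOnePowHom k).range := by
  have : (s : k) * s = 1 := by simpa using congrArg Units.val hs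
  obtain hs1 | hs1 := mul_self_eq_one_iff.mp this
  · exact ⟨1, by ext; simp [hs1]⟩
  · exact ⟨.ofAdd 1, by ext; simp [negOnePowHom, hs1]⟩

end Sign

structure IsHappyAddCocycle {A : Type*} [AddCommGroup A] (E : K → K → K → A) : Prop where
  cocycle : ∀ x y z t : K, E y z t + E x (y * z) t + E x y z = E (x * y) z t + E x y (z * t)
  normalized : ∀ x z : K, E x 1 z = 0
  happy : ∀ x y z : K, [x, y, z].Perm [σ, τ, ρ] → E x y z = E σ σ σ + E τ τ τ + E ρ ρ ρ

namespace IsHappyAddCocycle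

variable {k : Type*} [Field k] {A : Type*} [AddCommGroup A] {E : K → K → K → A}

def toZ3h (hE : IsHappyAddCocycle E) (χ : Multiplicative A →* kˣ) : Z3h k :=
  ⟨fun x y z => χ (.ofAdd (E x y z)),
    fun x y z t => by simp only [← map_mul, ← ofAdd_add, hE.cocycle],
    fun x z => by simp [hE.normalized],
    fun x y z h => by simp only [hE.happy x y z h, ofAdd_add, map_mul]⟩

theorem eval_toZ3h (hE : IsHappyAddCocycle E) (χ : Multiplicative A →* kˣ) {a b c d e : A}
    (hv : evalFive E = (a, b, c, d, e)) :
    Z3h.eval k (hE.toZ3h χ) =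
      (χ (.ofAdd a), χ (.ofAdd b), χ (.ofAdd c), χ (.ofAdd d), χ (.ofAdd e)) := by
  simp only [evalFive, Prod.mk.injEq] at hv
  obtain ⟨rfl, rfl, rfl, rfl, rfl⟩ := hv
  rfl

end IsHappyAddCocycle

-- Trilinear forms over `𝔽₂` are additive 3-cocycles.
def expσ (x y z : K) : ZMod 2 :=
  x.toAdd.1 * y.toAdd.1 * z.toAdd.1 + x.toAdd.1 * y.toAdd.2 * z.toAdd.2 +
    x.toAdd.2 * y.toAdd.1 * z.toAdd.2 + x.toAdd.2 * y.toAdd.2 * z.toAdd.1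

def expτ (x y z : K) : ZMod 2 :=
  x.toAdd.1 * y.toAdd.1 * z.toAdd.2 + x.toAdd.1 * y.toAdd.2 * z.toAdd.1 +
    x.toAdd.2 * y.toAdd.1 * z.toAdd.1 + x.toAdd.2 * y.toAdd.2 * z.toAdd.2

def expρ (x y z : K) : ZMod 2 :=
  x.toAdd.1 * y.toAdd.2 * z.toAdd.2 + x.toAdd.2 * y.toAdd.1 * z.toAdd.2 +
    x.toAdd.2 * y.toAdd.2 * z.toAdd.1

def cyclicSign (x y : K) : ℤ :=
  if (x, y) = (σ, ρ) ∨ (x, y) = (τ, σ) ∨ (x, y) = (ρ, τ) then 1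
  else if (y, x) = (σ, ρ) ∨ (y, x) = (τ, σ) ∨ (y, x) = (ρ, τ) then -1 else 0

def expU (x y z : K) : ℤ := if z = x then cyclicSign x y else 0

def diagIndicator (x y : K) : ℤ := if x = y ∧ x ≠ 1 then 1 else 0

def expV (x y z : K) : ℤ :=
  diagIndicator y z - diagIndicator (x * y) z + diagIndicator x (y * z) - diagIndicator x y

theorem isHappyAddCocycle_expσ : IsHappyAddCocycle expσ := ⟨by decide, by decide, by decide⟩
theorem isHappyAddCocycle_expτ : IsHappyAddCocycle expτ := ⟨by decide, by decide, by decide⟩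
theorem isHappyAddCocycle_expρ : IsHappyAddCocycle expρ := ⟨by decide, by decide, by decide⟩
theorem isHappyAddCocycle_expU : IsHappyAddCocycle expU := ⟨by decide, by decide, by decide⟩
theorem isHappyAddCocycle_expV : IsHappyAddCocycle expV := ⟨by decide, by decide, by decide⟩

theorem evalFive_expσ : evalFive expσ = (1, 0, 0, 0, 0) := by decide
theorem evalFive_expτ : evalFive expτ = (0, 1, 0, 0, 0) := by decide
theorem evalFive_expρ : evalFive expρ = (0, 0, 1, 0, 0) := by decide
theorem evalFive_expU : evalFive expU = (0, 0, 0, 1, 0) := by decide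
theorem evalFive_expV : evalFive expV = (0, 0, 0, 0, 1) := by decide

section

variable (k : Type*) [Field k]

def negOnePowProdMap :
    Multiplicative (ZMod 2) × Multiplicative (ZMod 2) × Multiplicative (ZMod 2) × kˣ × kˣ →*
      kˣ × kˣ × kˣ × kˣ × kˣ :=
  (negOnePowHom k).prodMap ((negOnePowHom k).prodMap ((negOnePowHom k).prodMap (.id _)))

variable {k} in
theorem negOnePowProdMap_injective (hk : ringChar k ≠ 2) :
    Function.Injective (negOnePowProdMap k) := by
  have h := negOnePowHom_injective hk
  simp only [negOnePowProdMap, MonoidHom.coe_prodMap, MonoidHom.coe_id]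
  exact h.prodMap (h.prodMap (h.prodMap Function.injective_id))

theorem Z3h.range_eval_le : (Z3h.eval k).range ≤ (negOnePowProdMap k).range := by
  rintro _ ⟨⟨φ, hc, hn, -⟩, rfl⟩
  obtain ⟨a, hσ⟩ := mem_range_negOnePowHom (hc.apply_diag_mul_self_eq_one hn σ_mul_σ)
  obtain ⟨b, hτ⟩ := mem_range_negOnePowHom (hc.apply_diag_mul_self_eq_one hn τ_mul_τ)
  obtain ⟨c, hρ⟩ := mem_range_negOnePowHom (hc.apply_diag_mul_self_eq_one hn ρ_mul_ρ)
  exact ⟨(a, b, c, φ ρ τ ρ, φ τ ρ ρ), by simp [negOnePowProdMap, hσ, hτ, hρ, eval, evalFive]⟩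

theorem Z3h.range_negOnePowProdMap_le : (negOnePowProdMap k).range ≤ (Z3h.eval k).range := by
  rintro _ ⟨⟨a, b, c, u, v⟩, rfl⟩
  let χ (a : Multiplicative (ZMod 2)) : Multiplicative (ZMod 2) →* kˣ :=
    (negOnePowHom k).comp (AddMonoidHom.toMultiplicative (AddMonoidHom.mulLeft a.toAdd))
  refine ⟨isHappyAddCocycle_expσ.toZ3h (χ a) * isHappyAddCocycle_expτ.toZ3h (χ b) *
    isHappyAddCocycle_expρ.toZ3h (χ c) * isHappyAddCocycle_expU.toZ3h (zpowersMulHom kˣ u) *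
    isHappyAddCocycle_expV.toZ3h (zpowersMulHom kˣ v), ?_⟩
  open IsHappyAddCocycle in
  simp [eval_toZ3h _ _ evalFive_expσ, eval_toZ3h _ _ evalFive_expτ, eval_toZ3h _ _ evalFive_expρ,
    eval_toZ3h _ _ evalFive_expU, eval_toZ3h _ _ evalFive_expV, χ, negOnePowProdMap,
    zpowersMulHom_apply]

end

theorem statement9 (k : Type*) [Field k] (hk : ringChar k ≠ 2) :
    Nonempty (Z3h k ≃*
      Multiplicative (ZMod 2) × Multiplicative (ZMod 2) × Multiplicative (ZMod 2)
        × kˣ × kˣ) := by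
  have hrange : (Z3h.eval k).range = (negOnePowProdMap k).range :=
    le_antisymm (Z3h.range_eval_le k) (Z3h.range_negOnePowProdMap_le k)
  exact ⟨(MonoidHom.ofInjective (Z3h.eval_injective k)).trans <|
    (MulEquiv.subgroupCongr hrange).trans
      (MonoidHom.ofInjective (negOnePowProdMap_injective hk)).symm⟩
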